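/- The Stieltjes transform of the arcsine law on [−r,r], i.e. the measure with density (1/π)·1/√(r²−x²) on (−r,r), equals 1/√(z²−r²) for all z in the upper half-plane, where the square root is the principal branch mapping ℂ⁺ to ℂ⁺. -/

import Mathlib

open MeasureTheory Real

/-- The arcsine law on `(-r, r)`: density `(1/π)/√(r²−x²)`. -/
noncomputable def arcsineMeasure (r : ℝ) : Measure ℝ :=
  volume.withDensity fun x =>
    ENNReal.ofReal (if x ∈ Set.Ioo (-r) r then (1 / π) / Real.sqrt (r ^ 2 - x ^ 2) else 0)

/-- The Stieltjes transform of a measure on ℝ. -/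
noncomputable def stieltjes (μ : Measure ℝ) (z : ℂ) : ℂ :=
  ∫ x : ℝ, (z - (x : ℂ))⁻¹ ∂μ

/-- The square root `√(ρ e^{iθ}) = √ρ · e^{iθ/2}` with the argument θ taken in `[0, 2π)`,
which maps `ℂ⁺` to `ℂ⁺`. -/
noncomputable def sqrtUpper (w : ℂ) : ℂ :=
  (Real.sqrt ‖w‖ : ℂ) *
    Complex.exp (Complex.I * (((if 0 ≤ Complex.arg w then Complex.arg w
      else Complex.arg w + 2 * π) : ℝ) / 2))

/-
Substituting `x = r (t² - 1) / (t² + 1)` turns the Stieltjes transform of the arcsine law into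
`(2 / π) (z - r)⁻¹ ∫₀^∞ dt / (t² + u²)`, where `u² = (z + r) / (z - r)`. When `Re u > 0` the last
integral is `π / (2u)`, computed from the antiderivative `(2iu)⁻¹ (log (t - iu) - log (t + iu))`,
so the transform is `1 / (u (z - r))`. Taking `u = V / (z - r)` with `V = sqrtUpper (z² - r²)`,
the sign conditions `Im V ≥ 0` and `Im u² < 0` (as `Im z > 0`) force `Re u > 0`.
-/

open Filter Topology Complex ComplexConjugate

lemma sqrtUpper_sq (w : ℂ) : sqrtUpper w ^ 2 = w := by
  have hexp : ∀ θ : ℝ, cexp (I * (θ / 2)) ^ 2 = cexp (θ * I) := fun θ => by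
    rw [← Complex.exp_nat_mul]; ring_nf
  unfold sqrtUpper
  rw [mul_pow, ← ofReal_pow, Real.sq_sqrt (norm_nonneg w), hexp]
  split_ifs
  · exact norm_mul_exp_arg_mul_I w
  · rw [ofReal_add, add_mul, Complex.exp_add, ofReal_mul, ofReal_ofNat, exp_two_pi_mul_I, mul_one,
      norm_mul_exp_arg_mul_I]

lemma sqrtUpper_im_nonneg (w : ℂ) : 0 ≤ (sqrtUpper w).im := by
  set θ : ℝ := if 0 ≤ arg w then arg w else arg w + 2 * π
  have hθ : 0 ≤ θ ∧ θ ≤ 2 * π := by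
    simp only [θ]
    split_ifs with h
    · exact ⟨h, by linarith [arg_le_pi w, pi_pos]⟩
    · exact ⟨by linarith [neg_pi_lt_arg w], by linarith⟩
  have : (sqrtUpper w).im = √‖w‖ * Real.sin (θ / 2) := by
    rw [sqrtUpper, im_ofReal_mul, mul_comm I, ← ofReal_ofNat, ← ofReal_div, exp_ofReal_mul_I_im]
  rw [this]
  exact mul_nonneg (Real.sqrt_nonneg _)
    (Real.sin_nonneg_of_nonneg_of_le_pi (by linarith) (by linarith))

lemma re_pos_of_sq_mul_sub_eq_add {r : ℝ} {z u : ℂ} (hr : 0 < r) (hz : 0 < z.im)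
    (hu : u ^ 2 * (z - r) = z + r) (him : 0 ≤ (u * (z - r)).im) : 0 < u.re := by
  obtain ⟨p, q⟩ := u
  obtain ⟨x, v⟩ := z
  have hu_re := congrArg re hu
  have hu_im := congrArg im hu
  simp only [sq, mul_re, mul_im, sub_re, sub_im, add_re, add_im, ofReal_re, ofReal_im]
    at hu_re hu_im him
  simp only at hz ⊢
  -- `Im (u²) < 0` puts `u` in the second or fourth quadrant; the second is excluded since both
  -- `u (z - r)` and `(z + r) ū = ‖u‖² u (z - r)` have nonnegative imaginary part.
  have hpq : p * q < 0 := by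
    have hβ : 2 * (p * q) * ((x - r) ^ 2 + v ^ 2) = -2 * r * v := by
      linear_combination (x - r) * hu_im - v * hu_re
    have : 0 < (x - r) ^ 2 + v ^ 2 := by positivity
    nlinarith
  have hconj : 0 ≤ v * p - (x + r) * q := by
    have : v * p - (x + r) * q = (p ^ 2 + q ^ 2) * (p * v + q * (x - r)) := by
      linear_combination q * hu_re - p * hu_im
    rw [this]
    nlinarith
  nlinarith

lemma hasDerivAt_log_sub_log_add {a : ℂ} (ha : a.im ≠ 0) (t : ℝ) :
    HasDerivAt (fun t : ℝ => log (t - a) - log (t + a))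
      (2 * a * ((t : ℂ) ^ 2 - a ^ 2)⁻¹) t := by
  have hofReal : HasDerivAt (fun t : ℝ => (t : ℂ)) 1 t := (hasDerivAt_id t).ofReal_comp
  have hsub : (t : ℂ) - a ∈ slitPlane := mem_slitPlane_iff.2 (Or.inr (by simpa using ha))
  have hadd : (t : ℂ) + a ∈ slitPlane := mem_slitPlane_iff.2 (Or.inr (by simpa using ha))
  refine ((hofReal.sub_const a).clog_real hsub).sub ((hofReal.add_const a).clog_real hadd)
    |>.congr_deriv ?_
  have h₁ := slitPlane_ne_zero hsub
  have h₂ := slitPlane_ne_zero hadd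
  rw [show (t : ℂ) ^ 2 - a ^ 2 = (t - a) * (t + a) by ring]
  field_simp
  ring

lemma tendsto_log_sub_log_add_atTop (a : ℂ) :
    Tendsto (fun t : ℝ => log (t - a) - log (t + a)) atTop (𝓝 0) := by
  have hlog : ∀ b : ℂ, Tendsto (fun t : ℝ => log (1 + b / t)) atTop (𝓝 0) := fun b => by
    have hb : Tendsto (fun t : ℝ => 1 + b / t) atTop (𝓝 1) := by
      simpa [div_eq_mul_inv] using (tendsto_inv_atTop_zero.ofReal.const_mul b).const_add 1
    simpa [Function.comp_def] using (continuousAt_clog one_mem_slitPlane).tendsto.comp hb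
  have hsplit : ∀ᶠ t : ℝ in atTop, ∀ b : ℂ, ‖b‖ = ‖a‖ →
      log (t + b) = Real.log t + log (1 + b / t) := by
    filter_upwards [eventually_gt_atTop ‖a‖] with t ht b hb
    have ht0 : 0 < t := (norm_nonneg a).trans_lt ht
    have hlt : ‖b / t‖ < 1 := by
      rw [norm_div, norm_real, Real.norm_of_nonneg ht0.le, div_lt_one ht0, hb]; exact ht
    rw [← log_ofReal_mul ht0 (slitPlane_ne_zero (mem_slitPlane_of_norm_lt_one hlt)),
      mul_add, mul_one, mul_div_cancel₀ _ (ofReal_ne_zero.2 ht0.ne')]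
  refine (((hlog (-a)).sub (hlog a)).congr' ?_).trans (by rw [sub_zero])
  filter_upwards [hsplit] with t ht
  rw [sub_eq_add_neg (t : ℂ), ht a rfl, ht (-a) (norm_neg a), neg_div]
  ring

lemma log_neg_sub_log {a : ℂ} (ha : 0 < a.im) : log (-a) - log a = -(π * I) := by
  rw [Complex.log, Complex.log, norm_neg, arg_neg_eq_arg_sub_pi_of_im_pos ha]
  push_cast
  ring

lemma re_mul_sq_add_norm_sq_le {u : ℂ} (t : ℝ) :
    u.re * (t ^ 2 + ‖u‖ ^ 2) ≤ ‖u‖ * ‖(t : ℂ) ^ 2 + u ^ 2‖ :=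
  calc u.re * (t ^ 2 + ‖u‖ ^ 2) = (conj u * ((t : ℂ) ^ 2 + u ^ 2)).re := by
        rw [Complex.sq_norm, normSq_apply]
        simp only [sq, mul_re, mul_im, add_re, add_im, conj_re, conj_im, ofReal_re, ofReal_im]
        ring
    _ ≤ ‖conj u * ((t : ℂ) ^ 2 + u ^ 2)‖ := re_le_norm _
    _ = ‖u‖ * ‖(t : ℂ) ^ 2 + u ^ 2‖ := by rw [norm_mul, RCLike.norm_conj]

lemma integrable_inv_sq_add_sq {u : ℂ} (hu : 0 < u.re) :
    Integrable fun t : ℝ => ((t : ℂ) ^ 2 + u ^ 2)⁻¹ := by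
  have hu₀ : 0 < ‖u‖ := hu.trans_le (re_le_norm u)
  refine ((integrable_inv_one_add_sq.comp_div hu₀.ne').const_mul (u.re * ‖u‖)⁻¹).mono'
    (by fun_prop) (ae_of_all _ fun t => ?_)
  have hlow : u.re * (t ^ 2 + ‖u‖ ^ 2) / ‖u‖ ≤ ‖(t : ℂ) ^ 2 + u ^ 2‖ :=
    (div_le_iff₀' hu₀).2 (re_mul_sq_add_norm_sq_le t)
  calc ‖((t : ℂ) ^ 2 + u ^ 2)⁻¹‖ ≤ (u.re * (t ^ 2 + ‖u‖ ^ 2) / ‖u‖)⁻¹ := by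
        rw [norm_inv]; exact inv_anti₀ (by positivity) hlow
    _ = (u.re * ‖u‖)⁻¹ * (1 + (t / ‖u‖) ^ 2)⁻¹ := by
        field_simp
        ring

lemma integral_Ioi_inv_sq_add_sq {u : ℂ} (hu : 0 < u.re) :
    ∫ t in Set.Ioi (0 : ℝ), ((t : ℂ) ^ 2 + u ^ 2)⁻¹ = π / (2 * u) := by
  set a := I * u
  have ha : 0 < a.im := by simpa [a] using hu
  have ha₀ : a ≠ 0 := fun h => by simp [h] at ha
  have hsq : ∀ t : ℝ, (t : ℂ) ^ 2 + u ^ 2 = (t : ℂ) ^ 2 - a ^ 2 := fun t => by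
    simp only [a, mul_pow, I_sq]; ring
  have hderiv : ∀ t ∈ Set.Ici (0 : ℝ), HasDerivAt
      (fun t : ℝ => (2 * a)⁻¹ * (log (t - a) - log (t + a))) ((t : ℂ) ^ 2 + u ^ 2)⁻¹ t :=
    fun t _ => ((hasDerivAt_log_sub_log_add ha.ne' t).const_mul (2 * a)⁻¹).congr_deriv (by
      rw [hsq]; field_simp)
  rw [integral_Ioi_of_hasDerivAt_of_tendsto' hderiv (integrable_inv_sq_add_sq hu).integrableOn
    (by simpa using (tendsto_log_sub_log_add_atTop a).const_mul (2 * a)⁻¹)]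
  simp only [ofReal_zero, zero_sub, zero_add, log_neg_sub_log ha, a]
  field_simp

lemma integral_arcsineMeasure {E : Type*} [NormedAddCommGroup E] [NormedSpace ℝ E]
    (r : ℝ) (g : ℝ → E) :
    ∫ x, g x ∂arcsineMeasure r
      = π⁻¹ • ∫ x in Set.Ioo (-r) r, (√(r ^ 2 - x ^ 2))⁻¹ • g x := by
  have hmeas : Measurable fun x : ℝ => ENNReal.ofReal
      (if x ∈ Set.Ioo (-r) r then (1 / π) / √(r ^ 2 - x ^ 2) else 0) :=
    (Measurable.ite measurableSet_Ioo (by fun_prop) measurable_const).ennreal_ofReal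
  rw [arcsineMeasure, integral_withDensity_eq_integral_toReal_smul hmeas
    (ae_of_all _ fun _ => ENNReal.ofReal_lt_top), ← integral_smul,
    ← integral_indicator measurableSet_Ioo]
  congr 1 with x
  by_cases hx : x ∈ Set.Ioo (-r) r
  · rw [Set.indicator_of_mem hx, if_pos hx, ENNReal.toReal_ofReal (by positivity), smul_smul,
      one_div, div_eq_mul_inv]
  · simp [hx]

-- `x = -r cos θ` written in `t = tan (θ / 2)`.
noncomputable def weierstrassSubst (r t : ℝ) : ℝ := r - 2 * r / (1 + t ^ 2)

lemma hasDerivAt_weierstrassSubst (r t : ℝ) :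
    HasDerivAt (weierstrassSubst r) (4 * r * t / (1 + t ^ 2) ^ 2) t := by
  refine (((hasDerivAt_const t (2 * r)).div ((hasDerivAt_pow 2 t).const_add 1)
    (by positivity)).const_sub r).congr_deriv ?_
  push_cast
  ring

lemma injOn_weierstrassSubst {r : ℝ} (hr : r ≠ 0) :
    Set.InjOn (weierstrassSubst r) (Set.Ioi 0) := by
  intro s (hs : 0 < s) t (ht : 0 < t) hst
  refine (sq_eq_sq₀ hs.le ht.le).1 ?_
  simp only [weierstrassSubst, sub_right_inj] at hst
  field_simp at hst
  linarith

lemma weierstrassSubst_image_Ioi {r : ℝ} (hr : 0 < r) :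
    weierstrassSubst r '' Set.Ioi 0 = Set.Ioo (-r) r := by
  ext x
  constructor
  · rintro ⟨t, ht : 0 < t, rfl⟩
    have hlt : 2 * r / (1 + t ^ 2) < 2 * r := div_lt_self (by positivity) (by nlinarith)
    have hpos : 0 < 2 * r / (1 + t ^ 2) := by positivity
    constructor <;> rw [weierstrassSubst] <;> linarith
  · rintro ⟨hx₁, hx₂⟩
    have hpos : 0 < (r + x) / (r - x) := div_pos (by linarith) (by linarith)
    refine ⟨√((r + x) / (r - x)), Real.sqrt_pos.2 hpos, ?_⟩
    rw [weierstrassSubst, Real.sq_sqrt hpos.le, one_add_div (by linarith),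
      show r - x + (r + x) = 2 * r by ring]
    field_simp
    ring

lemma sqrt_sq_sub_weierstrassSubst_sq {r t : ℝ} (hr : 0 ≤ r) (ht : 0 ≤ t) :
    √(r ^ 2 - weierstrassSubst r t ^ 2) = 2 * r * t / (1 + t ^ 2) := by
  rw [← Real.sqrt_sq (by positivity : 0 ≤ 2 * r * t / (1 + t ^ 2)), weierstrassSubst]
  congr 1
  field_simp
  ring

lemma setIntegral_Ioo_inv_sqrt_sq_sub_sq_smul {E : Type*} [NormedAddCommGroup E] [NormedSpace ℝ E]
    {r : ℝ} (hr : 0 < r) (g : ℝ → E) :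
    ∫ x in Set.Ioo (-r) r, (√(r ^ 2 - x ^ 2))⁻¹ • g x
      = ∫ t in Set.Ioi 0, (2 / (1 + t ^ 2)) • g (weierstrassSubst r t) := by
  rw [← weierstrassSubst_image_Ioi hr, integral_image_eq_integral_abs_deriv_smul measurableSet_Ioi
    (fun t _ => (hasDerivAt_weierstrassSubst r t).hasDerivWithinAt) (injOn_weierstrassSubst hr.ne')]
  refine setIntegral_congr_fun measurableSet_Ioi fun t (ht : 0 < t) => ?_
  rw [sqrt_sq_sub_weierstrassSubst_sq hr.le ht.le, smul_smul, abs_of_pos (by positivity)]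
  congr 1
  field_simp
  ring

lemma sub_ofReal_ne_zero {z : ℂ} (hz : 0 < z.im) (x : ℝ) : z - x ≠ 0 := fun h =>
  hz.ne' (by simpa using congrArg im h)

lemma smul_inv_sub_weierstrassSubst {r : ℝ} {z u : ℂ}
    (hu : u ^ 2 * (z - r) = z + r) (t : ℝ) :
    (2 / (1 + t ^ 2)) • (z - weierstrassSubst r t)⁻¹
      = 2 * (z - r)⁻¹ * ((t : ℂ) ^ 2 + u ^ 2)⁻¹ := by
  have hden : (z - weierstrassSubst r t) * (1 + t ^ 2) = (z - r) * (t ^ 2 + u ^ 2) := by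
    have ht : 1 + (t : ℂ) ^ 2 ≠ 0 := by exact_mod_cast (by positivity : 1 + t ^ 2 ≠ 0)
    rw [weierstrassSubst]
    push_cast
    field_simp
    linear_combination -hu
  calc (2 / (1 + t ^ 2)) • (z - weierstrassSubst r t)⁻¹
      = 2 * ((z - weierstrassSubst r t) * (1 + t ^ 2))⁻¹ := by
        rw [real_smul, mul_inv]
        push_cast
        ring
    _ = 2 * (z - r)⁻¹ * ((t : ℂ) ^ 2 + u ^ 2)⁻¹ := by rw [hden, mul_inv, mul_assoc]

theorem stieltjes_arcsine_eq (r : ℝ) (hr : 0 < r) (z : ℂ) (hz : 0 < z.im) :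
    stieltjes (arcsineMeasure r) z = 1 / sqrtUpper (z ^ 2 - (r : ℂ) ^ 2) := by
  have hzr := sub_ofReal_ne_zero hz r
  set V := sqrtUpper (z ^ 2 - (r : ℂ) ^ 2)
  set u := V / (z - r)
  have hu : u ^ 2 * (z - r) = z + r := by
    rw [div_pow, sqrtUpper_sq]; field_simp; ring
  have hu_re : 0 < u.re := re_pos_of_sq_mul_sub_eq_add hr hz hu
    (by rw [div_mul_cancel₀ _ hzr]; exact sqrtUpper_im_nonneg _)
  rw [stieltjes, integral_arcsineMeasure, setIntegral_Ioo_inv_sqrt_sq_sub_sq_smul hr,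
    setIntegral_congr_fun measurableSet_Ioi fun t _ => smul_inv_sub_weierstrassSubst hu t,
    integral_const_mul, integral_Ioi_inv_sq_add_sq hu_re]
  have hu₀ : u ≠ 0 := fun h => by simp [h] at hu_re
  have hV : V = u * (z - r) := (div_mul_cancel₀ V hzr).symm
  have hπ : (π : ℂ) ≠ 0 := ofReal_ne_zero.2 pi_ne_zero
  rw [real_smul, hV, ofReal_inv]
  field_simp
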